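/- arXiv:gr-qc/0605006 — 3 statements merged into one kernel-verified Lean document; each statement's English description precedes it below -/
import Mathlib

section
/- Almost surely, a Poisson point process on 2-dimensional Minkowski space with positive intensity has no 'nearest point to the origin' in the Lorentzian sense: for every configuration point p in the interior of the future light cone of the origin, there exists another configuration point q in the future light cone with strictly smaller (positive) Lorentzian distance from the origin. -/
/-!
If a configuration point `p` in the future cone had minimal squared Lorentzian distance `d > 0`,
the configuration would miss the set of future points at squared distance `< d`. That set has
infinite area, since it contains the strip of width `d / (2x)` below the light ray `y = x`, and a
Poisson process misses a set of infinite area with probability zero (it misses subsets of area `a`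
with probability `exp (-ρ a)`). Countably many values `d = 1 / (n + 1)` suffice.
-/

open MeasureTheory Set Filter Topology

def HasPoissonCounts {α : Type*} [MeasurableSpace α] [MeasurableSpace (Set α)] (ρ : ℝ)
    (ν : Measure α) (μ : Measure (Set α)) : Prop :=
  ∀ A : Set α, MeasurableSet A → ν A < ⊤ → ∀ k : ℕ,
    μ {ω | (ω ∩ A).Finite ∧ (ω ∩ A).ncard = k} =
      ENNReal.ofReal ((ρ * (ν A).toReal) ^ k * Real.exp (-(ρ * (ν A).toReal)) / k.factorial)

namespace HasPoissonCounts

variable {α : Type*} [MeasurableSpace α] [MeasurableSpace (Set α)] {ρ : ℝ} {ν : Measure α}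
  {μ : Measure (Set α)}

theorem measure_inter_eq_empty (h : HasPoissonCounts ρ ν μ) {B : Set α}
    (hB : MeasurableSet B) (hνB : ν B < ⊤) :
    μ {ω | ω ∩ B = ∅} = ENNReal.ofReal (Real.exp (-(ρ * (ν B).toReal))) := by
  have hempty : {ω : Set α | ω ∩ B = ∅} = {ω | (ω ∩ B).Finite ∧ (ω ∩ B).ncard = 0} := by
    ext ω
    constructor
    · intro (hω : ω ∩ B = ∅)
      simp [hω]
    · rintro ⟨hfin, hcard⟩
      exact (ncard_eq_zero hfin).1 hcard
  rw [hempty, h B hB hνB 0]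
  simp

theorem measure_disjoint_eq_zero [SigmaFinite ν] (h : HasPoissonCounts ρ ν μ) (hρ : 0 < ρ)
    {A : Set α} (hA : MeasurableSet A) (hνA : ν A = ⊤) :
    μ {ω | Disjoint ω A} = 0 := by
  have hbound : ∀ t : ℝ, μ {ω | Disjoint ω A} ≤ ENNReal.ofReal (Real.exp (-(ρ * t))) := by
    intro t
    have htA : ENNReal.ofReal t < ν A := hνA ▸ ENNReal.ofReal_lt_top
    obtain ⟨B, hB, hBA, htB, hνB⟩ := Measure.exists_subset_measure_lt_top hA htA
    have ht : t ≤ (ν B).toReal := (ENNReal.ofReal_le_iff_le_toReal hνB.ne).1 htB.le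
    calc μ {ω | Disjoint ω A} ≤ μ {ω | ω ∩ B = ∅} :=
          measure_mono fun ω hω => (Disjoint.mono_right hBA hω).inter_eq
      _ = ENNReal.ofReal (Real.exp (-(ρ * (ν B).toReal))) := h.measure_inter_eq_empty hB hνB
      _ ≤ ENNReal.ofReal (Real.exp (-(ρ * t))) := by gcongr
  have htendsto : Tendsto (fun t : ℝ => ENNReal.ofReal (Real.exp (-(ρ * t)))) atTop (𝓝 0) := by
    rw [← ENNReal.ofReal_zero]
    exact ENNReal.tendsto_ofReal
      (Real.tendsto_exp_neg_atTop_nhds_zero.comp (tendsto_id.const_mul_atTop hρ))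
  exact le_antisymm (ge_of_tendsto' htendsto hbound) zero_le

end HasPoissonCounts

def futureLorentzBall (ε : ℝ) : Set (ℝ × ℝ) :=
  {q | |q.2| < q.1 ∧ q.1 ^ 2 - q.2 ^ 2 < ε}

theorem measurableSet_futureLorentzBall (ε : ℝ) : MeasurableSet (futureLorentzBall ε) :=
  (measurableSet_lt (f := fun q : ℝ × ℝ => |q.2|) (by fun_prop) (by fun_prop)).inter
    (measurableSet_lt (f := fun q : ℝ × ℝ => q.1 ^ 2 - q.2 ^ 2) (by fun_prop) (by fun_prop))

theorem lintegral_Ioi_ofReal_inv_eq_top {a : ℝ} (ha : 0 ≤ a) :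
    ∫⁻ x in Ioi a, ENNReal.ofReal x⁻¹ = ⊤ := by
  by_contra hfin
  refine not_integrableOn_Ioi_inv (a := a) ⟨measurable_inv.aestronglyMeasurable, ?_⟩
  refine (hasFiniteIntegral_iff_ofReal ?_).2 (lt_top_iff_ne_top.2 hfin)
  exact ae_restrict_of_forall_mem measurableSet_Ioi fun x hx => inv_nonneg.2 (ha.trans hx.le)

/-- On the strip, `x² - y² = (x - y)(x + y) < (ε / (2x)) · 2x`; starting it at `1 + ε` keeps its
lower edge above `y = 0`. -/
theorem regionBetween_subset_futureLorentzBall {ε : ℝ} (hε : 0 < ε) :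
    regionBetween (fun x => x - ε / (2 * x)) id (Ioi (1 + ε)) ⊆ futureLorentzBall ε := by
  rintro ⟨x, y⟩ ⟨hx, hyl, hyu⟩
  simp only [mem_Ioi] at hx
  simp only [id] at hyu
  have hx0 : 0 < x := by linarith
  have hwidth : (x - y) * (2 * x) < ε := by
    rw [← lt_div_iff₀ (by positivity)]
    linarith
  have hy0 : 0 < y := by
    have : ε / (2 * x) < x := by
      rw [div_lt_iff₀ (by positivity)]
      nlinarith
    linarith
  refine ⟨by rwa [abs_of_pos hy0], ?_⟩
  nlinarith

theorem volume_futureLorentzBall {ε : ℝ} (hε : 0 < ε) : volume (futureLorentzBall ε) = ⊤ := by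
  refine measure_mono_top (regionBetween_subset_futureLorentzBall hε) ?_
  have hgap : ∀ x : ℝ, ((id : ℝ → ℝ) - fun x => x - ε / (2 * x)) x = ε / 2 * x⁻¹ := by
    intro x
    simp only [Pi.sub_apply, id]
    ring
  rw [Measure.volume_eq_prod, volume_regionBetween_eq_lintegral (by fun_prop) (by fun_prop)
    measurableSet_Ioi]
  simp_rw [hgap, ENNReal.ofReal_mul (by positivity : (0 : ℝ) ≤ ε / 2)]
  rw [lintegral_const_mul _ (by fun_prop), lintegral_Ioi_ofReal_inv_eq_top (by positivity),
    ENNReal.mul_top (by simpa using hε)]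

theorem poisson_process_no_nearest_point_general
    [MeasurableSpace (Set (ℝ × ℝ))]
    (ρ : ℝ) (hρ : 0 < ρ)
    (μ : Measure (Set (ℝ × ℝ))) [IsProbabilityMeasure μ]
    (hcount : ∀ A : Set (ℝ × ℝ), MeasurableSet A → volume A < ⊤ → ∀ k : ℕ,
      μ {ω | (ω ∩ A).Finite ∧ (ω ∩ A).ncard = k} =
        ENNReal.ofReal
          ((ρ * (volume A).toReal) ^ k * Real.exp (-(ρ * (volume A).toReal)) / k.factorial)) :
    μ {ω | ∀ p ∈ ω, |p.2| < p.1 →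
        ∃ q ∈ ω, |q.2| < q.1 ∧ q.1 ^ 2 - q.2 ^ 2 < p.1 ^ 2 - p.2 ^ 2} = 1 := by
  have hpoisson : HasPoissonCounts ρ volume μ := hcount
  have hcompl : {ω : Set (ℝ × ℝ) | ∀ p ∈ ω, |p.2| < p.1 →
      ∃ q ∈ ω, |q.2| < q.1 ∧ q.1 ^ 2 - q.2 ^ 2 < p.1 ^ 2 - p.2 ^ 2}ᶜ ⊆
      ⋃ n : ℕ, {ω | Disjoint ω (futureLorentzBall (1 / (n + 1)))} := by
    intro ω hω
    simp only [mem_compl_iff, mem_ofPred_eq, not_forall, not_exists, not_and, not_lt] at hω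
    obtain ⟨p, hp, hpcone, hpmin⟩ := hω
    obtain ⟨n, hn⟩ := exists_nat_one_div_lt (by nlinarith [abs_nonneg p.2, sq_abs p.2] :
      0 < p.1 ^ 2 - p.2 ^ 2)
    refine mem_iUnion.2 ⟨n, disjoint_left.2 fun q hq ⟨hqcone, hqdist⟩ => ?_⟩
    linarith [hpmin q hq hqcone]
  have hnull : μ (⋃ n : ℕ, {ω | Disjoint ω (futureLorentzBall (1 / (n + 1)))}) = 0 :=
    measure_iUnion_null fun n => hpoisson.measure_disjoint_eq_zero hρ
      (measurableSet_futureLorentzBall _) (volume_futureLorentzBall Nat.one_div_pos_of_nat)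
  rw [measure_congr (ae_eq_univ.2 (measure_mono_null hcompl hnull)), measure_univ]

/-- a Poisson point process on 2-dimensional Minkowski space with intensity
`ρ > 0` almost surely has no nearest point to the origin in the Lorentzian sense: for every
configuration point `p` strictly inside the future light cone of the origin there is another
configuration point `q` in the cone with strictly smaller Lorentzian distance from the
origin. -/
theorem poisson_process_no_nearest_point
    [MeasurableSpace (Set (ℝ × ℝ))]
    (ρ : ℝ) (hρ : 0 < ρ)
    (μ : Measure (Set (ℝ × ℝ))) [IsProbabilityMeasure μ]
    (hmeas : ∀ (A : Set (ℝ × ℝ)) (k : ℕ), MeasurableSet A →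
      MeasurableSet {ω : Set (ℝ × ℝ) | (ω ∩ A).Finite ∧ (ω ∩ A).ncard = k})
    (hcount : ∀ A : Set (ℝ × ℝ), MeasurableSet A → volume A < ⊤ → ∀ k : ℕ,
      μ {ω | (ω ∩ A).Finite ∧ (ω ∩ A).ncard = k} =
        ENNReal.ofReal
          ((ρ * (volume A).toReal) ^ k * Real.exp (-(ρ * (volume A).toReal)) / k.factorial)) :
    μ {ω | ∀ p ∈ ω, |p.2| < p.1 →
        ∃ q ∈ ω, |q.2| < q.1 ∧ q.1 ^ 2 - q.2 ^ 2 < p.1 ^ 2 - p.2 ^ 2} = 1 :=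
  poisson_process_no_nearest_point_general ρ hρ μ hcount
end

section
/- There is no Borel probability measure on the 'spacelike' unit hyperboloid {x ∈ ℝ² : x₁² − x₀² = 1} invariant under the boost group {Λ_t : t ∈ ℝ} where Λ_t(x₀,x₁) = (x₀ cosh t + x₁ sinh t, x₀ sinh t + x₁ cosh t). -/
open MeasureTheory

lemma no_translation_invariant_prob (ν : Measure ℝ) [IsProbabilityMeasure ν]
    (h : ∀ t : ℝ, Measure.map (· + t) ν = ν) : False := by
  have key : ∀ n : ℤ, ν (Set.Ico (n : ℝ) (n + 1)) = ν (Set.Ico (0 : ℝ) 1) := by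
    intro n
    conv_lhs => rw [← h (n : ℝ)]
    rw [Measure.map_apply (measurable_add_const _) measurableSet_Ico]
    congr 1
    ext x
    simp only [Set.mem_preimage, Set.mem_Ico]
    constructor
    · rintro ⟨h1, h2⟩; exact ⟨by linarith, by linarith⟩
    · rintro ⟨h1, h2⟩; exact ⟨by linarith, by linarith⟩
  have huniv : (Set.univ : Set ℝ) = ⋃ n : ℤ, Set.Ico (n : ℝ) (n + 1) := by
    ext x
    simp only [Set.mem_univ, Set.mem_iUnion, true_iff, Set.mem_Ico]
    exact ⟨⌊x⌋, Int.floor_le x, by exact_mod_cast Int.lt_floor_add_one x⟩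
  have hdisj : Pairwise (Function.onFun Disjoint fun n : ℤ => Set.Ico (n : ℝ) (n + 1)) := by
    intro m n hmn
    rcases lt_or_gt_of_ne hmn with hlt | hlt
    · apply Set.Ico_disjoint_Ico.mpr
      have h : (m : ℝ) + 1 ≤ n := by exact_mod_cast hlt
      exact le_trans (min_le_left _ _) (h.trans (le_max_right _ _))
    · apply Set.Ico_disjoint_Ico.mpr
      have h : (n : ℝ) + 1 ≤ m := by exact_mod_cast hlt
      exact le_trans (min_le_right _ _) (h.trans (le_max_left _ _))
  have h1 : ν Set.univ = ∑' n : ℤ, ν (Set.Ico (n : ℝ) (n + 1)) := by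
    rw [huniv, measure_iUnion hdisj fun n => measurableSet_Ico]
  rw [measure_univ] at h1
  simp only [key] at h1
  rcases eq_or_ne (ν (Set.Ico (0 : ℝ) 1)) 0 with hc | hc
  · rw [hc, tsum_zero] at h1; exact one_ne_zero h1
  · rw [ENNReal.tsum_const_eq_top_of_ne_zero hc] at h1
    exact ENNReal.one_ne_top h1

/-- there is no Borel probability measure concentrated on the spacelike unit
hyperboloid `{x₁² − x₀² = 1}` in 2-dimensional Minkowski space that is invariant under all
boosts `Λ_t`. -/
theorem no_boost_invariant_prob_measure_on_spacelike_hyperboloid :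
    ¬ ∃ μ : Measure (ℝ × ℝ), IsProbabilityMeasure μ ∧
        μ {x : ℝ × ℝ | x.2 ^ 2 - x.1 ^ 2 = 1}ᶜ = 0 ∧
        ∀ t : ℝ,
          Measure.map
            (fun x : ℝ × ℝ =>
              (x.1 * Real.cosh t + x.2 * Real.sinh t, x.1 * Real.sinh t + x.2 * Real.cosh t))
            μ = μ := by
  rintro ⟨μ, hprob, hconc, hinv⟩
  -- the function g x = log |x.1 + x.2|
  set g : ℝ × ℝ → ℝ := fun x => Real.log |x.1 + x.2| with hg
  have hgm : Measurable g := by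
    apply Real.measurable_log.comp
    exact (measurable_fst.add measurable_snd).abs
  set ν : Measure ℝ := Measure.map g μ with hν
  have : IsProbabilityMeasure ν := Measure.isProbabilityMeasure_map hgm.aemeasurable
  -- a.e., x.1 + x.2 ≠ 0
  have hae : ∀ᵐ x ∂μ, x.1 + x.2 ≠ 0 := by
    rw [MeasureTheory.ae_iff]
    apply measure_mono_null _ hconc
    intro x hx
    simp only [Set.mem_setOf_eq, not_not] at hx ⊢
    intro hmem
    have h2 : x.2 ^ 2 - x.1 ^ 2 = 1 := hmem
    have h3 : x.2 = -x.1 := by linarith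
    rw [h3, neg_sq] at h2
    linarith
  apply no_translation_invariant_prob ν
  intro t
  have hft : Measurable (fun x : ℝ × ℝ =>
      (x.1 * Real.cosh t + x.2 * Real.sinh t, x.1 * Real.sinh t + x.2 * Real.cosh t)) := by
    fun_prop
  calc Measure.map (· + t) ν = Measure.map ((· + t) ∘ g) μ := by
        rw [hν, Measure.map_map (measurable_add_const t) hgm]
    _ = Measure.map (g ∘ fun x : ℝ × ℝ =>
          (x.1 * Real.cosh t + x.2 * Real.sinh t, x.1 * Real.sinh t + x.2 * Real.cosh t)) μ := by
        apply Measure.map_congr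
        filter_upwards [hae] with x hx
        simp only [Function.comp_apply, hg]
        have : (x.1 * Real.cosh t + x.2 * Real.sinh t) + (x.1 * Real.sinh t + x.2 * Real.cosh t)
            = (x.1 + x.2) * Real.exp t := by
          rw [← Real.cosh_add_sinh]; ring
        rw [this, abs_mul, abs_of_pos (Real.exp_pos t),
          Real.log_mul (by positivity) (Real.exp_ne_zero t), Real.log_exp]
    _ = Measure.map g (Measure.map (fun x : ℝ × ℝ =>
          (x.1 * Real.cosh t + x.2 * Real.sinh t, x.1 * Real.sinh t + x.2 * Real.cosh t)) μ) := by
        rw [Measure.map_map hgm hft]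
    _ = ν := by rw [hinv t, hν]
end

section
/- Let G act measurably on Ω preserving a probability measure μ, and suppose ℝⁿ carries the translation action of G = ℝⁿ on itself. Then there is no measurable equivariant map D : Ω → ℝⁿ (i.e., satisfying D(ω translated by v) = D(ω) + v for all v). -/
open MeasureTheory

/-- if the additive group ℝⁿ (n ≥ 1) acts measurably on `Ω` preserving a
probability measure `μ`, there is no measurable equivariant map `D : Ω → ℝⁿ`
(where ℝⁿ carries the translation action on itself). -/
theorem no_equivariant_map_to_euclidean
    {n : ℕ} (hn : 1 ≤ n) {Ω : Type*} [MeasurableSpace Ω]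
    [AddAction (Fin n → ℝ) Ω]
    (hmΩ : ∀ v : Fin n → ℝ, Measurable fun ω : Ω => v +ᵥ ω)
    (μ : Measure Ω) [IsProbabilityMeasure μ]
    (hinv : ∀ v : Fin n → ℝ, Measure.map (fun ω : Ω => v +ᵥ ω) μ = μ) :
    ¬ ∃ D : Ω → (Fin n → ℝ), Measurable D ∧
        ∀ (v : Fin n → ℝ) (ω : Ω), D (v +ᵥ ω) = D ω + v := by
  rintro ⟨D, hD, hEq⟩
  set ν : Measure (Fin n → ℝ) := Measure.map D μ with hν
  have hνprob : IsProbabilityMeasure ν := Measure.isProbabilityMeasure_map hD.aemeasurable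
  -- translation invariance of ν
  have htrans : ∀ v : Fin n → ℝ, Measure.map (fun x => x + v) ν = ν := by
    intro v
    have hmv : Measurable fun x : Fin n → ℝ => x + v := measurable_id.add_const v
    rw [hν, Measure.map_map hmv hD]
    have : ((fun x : Fin n → ℝ => x + v) ∘ D) = D ∘ (fun ω : Ω => v +ᵥ ω) := by
      funext ω; simp [Function.comp, hEq]
    rw [this, ← Measure.map_map hD (hmΩ v), hinv v]
  set i : Fin n := ⟨0, hn⟩
  set B : ℤ → Set (Fin n → ℝ) := fun k => {x | (k : ℝ) ≤ x i ∧ x i < k + 1} with hB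
  have hBm : ∀ k, MeasurableSet (B k) := by
    intro k
    exact (measurableSet_le measurable_const (measurable_pi_apply i)).inter
      (measurableSet_lt (measurable_pi_apply i) measurable_const)
  have hBd : Pairwise (Function.onFun Disjoint B) := by
    intro k m hkm
    simp only [Function.onFun, Set.disjoint_left]
    rintro x ⟨hk1, hk2⟩ ⟨hm1, hm2⟩
    apply hkm
    have h1 : (k : ℝ) < m + 1 := lt_of_le_of_lt hk1 hm2
    have h2 : (m : ℝ) < k + 1 := lt_of_le_of_lt hm1 hk2
    have h1' : k < m + 1 := by exact_mod_cast h1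
    have h2' : m < k + 1 := by exact_mod_cast h2
    omega
  have hBu : (⋃ k, B k) = Set.univ := by
    ext x
    simp only [Set.mem_iUnion, Set.mem_univ, iff_true]
    exact ⟨⌊x i⌋, Int.floor_le _, Int.lt_floor_add_one _⟩
  have hBeq : ∀ k, ν (B k) = ν (B 0) := by
    intro k
    have := htrans (fun _ => (k : ℝ))
    have h0 : ν ((fun x : Fin n → ℝ => x + fun _ => (k:ℝ)) ⁻¹' B 0) = ν (B 0) := by
      conv_rhs => rw [← this]
      rw [Measure.map_apply (measurable_add_const _) (hBm 0)]
    have hpre : (fun x : Fin n → ℝ => x + fun _ => (k:ℝ)) ⁻¹' B 0 = B (-k) := by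
      ext x
      simp only [hB, Set.mem_preimage, Set.mem_setOf_eq, Pi.add_apply, Int.cast_neg,
        Int.cast_zero]
      constructor
      · rintro ⟨h1, h2⟩; constructor <;> linarith
      · rintro ⟨h1, h2⟩; constructor <;> linarith
    have : ν (B (-k)) = ν (B 0) := by rw [← hpre, h0]
    have h2 := this
    -- apply with -k
    have := htrans (fun _ => ((-k : ℤ) : ℝ))
    have h0' : ν ((fun x : Fin n → ℝ => x + fun _ => ((-k:ℤ):ℝ)) ⁻¹' B 0) = ν (B 0) := by
      conv_rhs => rw [← this]
      rw [Measure.map_apply (measurable_add_const _) (hBm 0)]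
    have hpre' : (fun x : Fin n → ℝ => x + fun _ => ((-k:ℤ):ℝ)) ⁻¹' B 0 = B k := by
      ext x
      simp only [hB, Set.mem_preimage, Set.mem_setOf_eq, Pi.add_apply, Int.cast_neg,
        Int.cast_zero]
      constructor
      · rintro ⟨h1, h2⟩; constructor <;> linarith
      · rintro ⟨h1, h2⟩; constructor <;> linarith
    rw [← hpre', h0']
  have hsum : ν Set.univ = ∑' k : ℤ, ν (B k) := by
    rw [← hBu, measure_iUnion hBd hBm]
  rw [measure_univ] at hsum
  rw [tsum_congr hBeq] at hsum
  rcases eq_or_ne (ν (B 0)) 0 with h | h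
  · rw [h, tsum_zero] at hsum; exact one_ne_zero hsum
  · rw [ENNReal.tsum_const_eq_top_of_ne_zero h] at hsum
    exact ENNReal.one_ne_top hsum
end
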